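/- arXiv:2210.00672 — 6 statements merged into one kernel-verified Lean document; each statement's English description precedes it below -/
import Mathlib

section
/- Let g: 2^X → ℝ be monotone nondecreasing with g(∅)=0 and δ > 0, and define the discretized function f₁(S) = ⌊(g(X) - g(S))/δ⌋·δ. Suppose that for sets C, C' ⊆ X and v ∉ C∪C' we have g(C∪C'∪{v}) - g(C∪C') ≤ g(C∪{v}) - g(C) + p for some p ≥ 0. Then f₁(C∪C') - f₁(C∪C'∪{v}) ≤ f₁(C) - f₁(C∪{v}) + p + 2δ. -/
theorem stmt_4 {X : Type*} [Fintype X] [DecidableEq X]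
    (g : Finset X → ℝ) (hmono : Monotone g) (hempty : g ∅ = 0)
    (δ p : ℝ) (hδ : 0 < δ) (hp : 0 ≤ p)
    (f1 : Finset X → ℝ)
    (hf1 : ∀ S, f1 S = (⌊(g Finset.univ - g S) / δ⌋ : ℤ) * δ)
    (C C' : Finset X) (v : X) (hv : v ∉ C ∪ C')
    (h : g (insert v (C ∪ C')) - g (C ∪ C') ≤ g (insert v C) - g C + p) :
    f1 (C ∪ C') - f1 (insert v (C ∪ C')) ≤ f1 C - f1 (insert v C) + p + 2 * δ := by
  have key : ∀ S, g Finset.univ - g S - δ < f1 S ∧ f1 S ≤ g Finset.univ - g S := by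
    intro S
    rw [hf1]
    constructor
    · have := Int.sub_one_lt_floor ((g Finset.univ - g S) / δ)
      have h2 : ((g Finset.univ - g S) / δ - 1) * δ < (⌊(g Finset.univ - g S) / δ⌋ : ℝ) * δ :=
        mul_lt_mul_of_pos_right this hδ
      calc g Finset.univ - g S - δ = ((g Finset.univ - g S) / δ - 1) * δ := by
            field_simp
        _ < _ := h2
    · have := Int.floor_le ((g Finset.univ - g S) / δ)
      have h2 : (⌊(g Finset.univ - g S) / δ⌋ : ℝ) * δ ≤ (g Finset.univ - g S) / δ * δ :=
        mul_le_mul_of_nonneg_right this hδ.le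
      calc _ ≤ (g Finset.univ - g S) / δ * δ := h2
        _ = g Finset.univ - g S := by field_simp
  obtain ⟨h1, h2⟩ := key (C ∪ C')
  obtain ⟨h3, h4⟩ := key (insert v (C ∪ C'))
  obtain ⟨h5, h6⟩ := key C
  obtain ⟨h7, h8⟩ := key (insert v C)
  linarith
end

section
/- Suppose a MinGC instance (X, w, g) satisfies: (i) whenever g(C) < g(X) some v ∈ X\C has positive marginal gain, and (ii) there is a constant p ≥ 0 such that for any C ⊂ X, the elements of C*\C (C* an optimal solution) can be ordered v_1,...,v_t (t minimal with g({v_1,...,v_t} ∪ C) = g(X)) so that g(C ∪ {v_1,...,v_i}) - g(C ∪ {v_1,...,v_{i-1}}) ≤ g(C∪{v_i}) - g(C) + p for all i ≤ t. Assume min weight is 1, w_max = max weight, δ the sparsity parameter, opt = w(C*). Then the greedy algorithm outputs a feasible solution C with w(C) ≤ ((p+1)·w_max/δ + ln((g(X) - p·opt)/opt)) · opt, where the logarithm term is taken to be 0 if g(X) ≤ (p+1)·opt. -/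
/-!
Amortized analysis. For a partial solution `C` put `a(C) = g(X) - g(C) - p·opt` and `θ = w_max / δ`,
and use the potential `Φ(a) = θ·a` for `a ≤ opt`, `Φ(a) = θ·opt + opt·log (a / opt)` beyond.
Summing the steps of condition (ii) and using the greedy choice bounds every marginal gain by
`ρ·w + p ≤ (ρ + p)·w`, where `ρ` is the greedy ratio, so `a(C) ≤ ρ·opt`. A greedy step of gain
`γ ≥ δ` costs `w_b = γ / ρ ≤ min θ (opt / a) · γ`, and the slope of `Φ` on `[a - γ, a]` is at least
`min θ (opt / a)`; so each step is paid for by the drop of `Φ`, and `w(C) ≤ Φ(g(X) - p·opt) - Φ(-p·opt)`.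
-/

open Finset Real

noncomputable def potential (θ opt a : ℝ) : ℝ :=
  θ * min a opt + opt * log (max a opt / opt)

lemma potential_of_le {θ opt a : ℝ} (h : a ≤ opt) : potential θ opt a = θ * a := by
  rcases eq_or_ne opt 0 with rfl | hopt
  · simp [potential, min_eq_left h]
  · simp [potential, min_eq_left h, max_eq_right h, div_self hopt]

lemma potential_of_ge {θ opt a : ℝ} (h : opt ≤ a) :
    potential θ opt a = θ * opt + opt * log (a / opt) := by
  simp [potential, min_eq_right h, max_eq_left h]

lemma div_mul_sub_le_mul_log_div {a b c : ℝ} (ha : 0 < a) (hb : 0 < b) (hc : 0 ≤ c) :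
    c / a * (a - b) ≤ c * log (a / b) := by
  have h := one_sub_inv_le_log_of_pos (div_pos ha hb)
  rw [inv_div] at h
  calc c / a * (a - b) = c * (1 - b / a) := by field_simp
    _ ≤ c * log (a / b) := mul_le_mul_of_nonneg_left h hc

lemma mul_sub_le_potential_sub {θ opt a a' c : ℝ} (hopt : 0 < opt) (haa : a' ≤ a)
    (hcθ : c ≤ θ) (hca : c * a ≤ opt) :
    c * (a - a') ≤ potential θ opt a - potential θ opt a' := by
  rcases le_or_gt a opt with h | h
  · rw [potential_of_le h, potential_of_le (haa.trans h), ← mul_sub]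
    exact mul_le_mul_of_nonneg_right hcθ (sub_nonneg.2 haa)
  have ha : 0 < a := hopt.trans h
  have hc : c ≤ opt / a := (le_div_iff₀ ha).2 hca
  rcases le_or_gt a' opt with h' | h'
  · rw [potential_of_ge h.le, potential_of_le h']
    calc c * (a - a') = c * (opt - a') + c * (a - opt) := by ring
      _ ≤ θ * (opt - a') + opt / a * (a - opt) :=
        add_le_add (mul_le_mul_of_nonneg_right hcθ (by linarith))
          (mul_le_mul_of_nonneg_right hc (by linarith))
      _ ≤ θ * opt + opt * log (a / opt) - θ * a' := by
        linarith [div_mul_sub_le_mul_log_div ha hopt hopt.le]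
  · have ha' : 0 < a' := hopt.trans h'
    rw [potential_of_ge h.le, potential_of_ge h'.le, log_div ha.ne' hopt.ne',
      log_div ha'.ne' hopt.ne']
    calc c * (a - a') ≤ opt / a * (a - a') := mul_le_mul_of_nonneg_right hc (sub_nonneg.2 haa)
      _ ≤ opt * log (a / a') := div_mul_sub_le_mul_log_div ha ha' hopt.le
      _ = _ := by rw [log_div ha.ne' ha'.ne']; ring

lemma potential_sub_add_le {θ : ℝ} (hθ : 0 ≤ θ) (G p opt : ℝ) :
    potential θ opt (G - p * opt) + θ * (p * opt) ≤
      ((p + 1) * θ + if G - (p + 1) * opt ≤ 0 then 0 else log ((G - p * opt) / opt)) * opt := by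
  split_ifs with h
  · rw [potential_of_le (by linarith)]
    have := mul_le_mul_of_nonneg_left (sub_nonpos.1 h) hθ
    linarith
  · rw [potential_of_ge (by linarith)]
    linarith

lemma sub_le_mul_sum_of_ordering {X : Type*} [DecidableEq X] {g : Finset X → ℝ} {w : X → ℝ}
    (hw1 : ∀ v, 1 ≤ w v) {C S : Finset X} {t : ℕ} {v : ℕ → X} {p ρ : ℝ} (hp : 0 ≤ p)
    (hρ : 0 ≤ ρ) (hinj : Set.InjOn v (Set.Iio t)) (hmem : ∀ i < t, v i ∈ S \ C)
    (hstep : ∀ i < t, g (C ∪ (range (i + 1)).image v) - g (C ∪ (range i).image v) ≤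
      g (insert (v i) C) - g C + p)
    (hratio : ∀ u ∉ C, g (insert u C) - g C ≤ ρ * w u) :
    g (C ∪ (range t).image v) - g C ≤ (ρ + p) * ∑ u ∈ S, w u := by
  calc g (C ∪ (range t).image v) - g C
        = ∑ i ∈ range t, (g (C ∪ (range (i + 1)).image v) - g (C ∪ (range i).image v)) := by
          rw [sum_range_sub (fun i ↦ g (C ∪ (range i).image v))]
          simp
    _ ≤ ∑ i ∈ range t, (ρ + p) * w (v i) := by
          refine sum_le_sum fun i hi ↦ ?_
          have hit := mem_range.1 hi
          have hgain := hratio (v i) (mem_sdiff.1 (hmem i hit)).2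
          have hpw : p ≤ p * w (v i) := le_mul_of_one_le_right hp (hw1 (v i))
          linarith [hstep i hit]
    _ = (ρ + p) * ∑ u ∈ (range t).image v, w u := by
          rw [← mul_sum, sum_image fun i hi j hj ↦ hinj (mem_range.1 hi) (mem_range.1 hj)]
    _ ≤ (ρ + p) * ∑ u ∈ S, w u := by
          refine mul_le_mul_of_nonneg_left (sum_le_sum_of_subset_of_nonneg ?_ ?_) (by positivity)
          · intro u hu
            obtain ⟨i, hi, rfl⟩ := mem_image.1 hu
            exact (mem_sdiff.1 (hmem i (mem_range.1 hi))).1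
          · exact fun u _ _ ↦ zero_le_one.trans (hw1 u)

lemma greedy_step_le_potential_sub {X : Type*} [Fintype X] [DecidableEq X] {w : X → ℝ}
    (hw1 : ∀ v, 1 ≤ w v) {g : Finset X → ℝ} {C : Finset X} {b : X}
    {wmax δ : ℝ} (hwmax : w b ≤ wmax) (hδpos : 0 < δ)
    (hδ : g C < g (insert b C) → δ ≤ g (insert b C) - g C)
    (hprog : ∃ v ∈ univ \ C, g C < g (insert v C))
    {Cstar : Finset X} {opt : ℝ} (hopt : ∑ v ∈ Cstar, w v ≤ opt) (hoptpos : 0 < opt)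
    {p G : ℝ} (hp : 0 ≤ p) {t : ℕ} {v : ℕ → X} (hinj : Set.InjOn v (Set.Iio t))
    (hmem : ∀ i < t, v i ∈ Cstar \ C) (hcov : g (C ∪ (range t).image v) = G)
    (hstep : ∀ i < t, g (C ∪ (range (i + 1)).image v) - g (C ∪ (range i).image v) ≤
      g (insert (v i) C) - g C + p)
    (hbest : ∀ v ∈ univ \ C, (g (insert v C) - g C) / w v ≤ (g (insert b C) - g C) / w b) :
    w b ≤ potential (wmax / δ) opt (G - g C - p * opt) -
      potential (wmax / δ) opt (G - g (insert b C) - p * opt) := by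
  have hwpos : ∀ v, 0 < w v := fun v ↦ one_pos.trans_le (hw1 v)
  set ρ := (g (insert b C) - g C) / w b with hρ_def
  obtain ⟨v₀, hv₀, hgain₀⟩ := hprog
  have hρ : 0 < ρ := (div_pos (sub_pos.2 hgain₀) (hwpos v₀)).trans_le (hbest v₀ hv₀)
  have hgain : 0 < g (insert b C) - g C := (div_pos_iff_of_pos_right (hwpos b)).1 hρ
  have hres : G - g C ≤ (ρ + p) * opt := by
    have := sub_le_mul_sum_of_ordering hw1 hp hρ.le hinj hmem hstep fun u hu ↦
      (div_le_iff₀ (hwpos u)).1 (hbest u (mem_sdiff.2 ⟨mem_univ u, hu⟩))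
    rw [hcov] at this
    exact this.trans (mul_le_mul_of_nonneg_left hopt (by positivity))
  have hcost : ρ⁻¹ * ((G - g C - p * opt) - (G - g (insert b C) - p * opt)) = w b := by
    rw [hρ_def]
    field_simp
    ring
  rw [← hcost]
  refine mul_sub_le_potential_sub hoptpos (by linarith) ?_ ((inv_mul_le_iff₀ hρ).2 (by linarith))
  rw [hρ_def, inv_div]
  exact div_le_div₀ ((hwpos b).le.trans hwmax) hwmax hδpos (hδ (by linarith))

lemma sum_iterate_add_le_of_step {X : Type*} [DecidableEq X] {w : X → ℝ}
    {Φ : Finset X → ℝ} {step : Finset X → Finset X}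
    (hstep : ∀ C, step C = C ∨ ∃ b ∉ C, step C = insert b C ∧ w b ≤ Φ C - Φ (insert b C))
    (C₀ : Finset X) (n : ℕ) :
    ∑ v ∈ step^[n] C₀, w v + Φ (step^[n] C₀) ≤ ∑ v ∈ C₀, w v + Φ C₀ := by
  induction n with
  | zero => rfl
  | succ n ih =>
    rw [Function.iterate_succ_apply']
    rcases hstep (step^[n] C₀) with hfix | ⟨b, hb, hins, hcost⟩
    · rwa [hfix]
    · rw [hins, sum_insert hb]
      linarith

theorem stmt_8_general {X : Type*} [Fintype X] [DecidableEq X]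
    (w : X → ℝ) (hw1 : ∀ v, 1 ≤ w v)
    (wmax : ℝ) (hwmax : ∀ v, w v ≤ wmax)
    (g : Finset X → ℝ) (hmono : Monotone g)
    (hempty : g ∅ = 0)
    (δ : ℝ) (hδpos : 0 < δ)
    (hδ : ∀ (C : Finset X) (v : X), v ∉ C → g C < g (insert v C) →
      δ ≤ g (insert v C) - g C)
    -- condition (i)
    (hprog : ∀ C : Finset X, g C < g Finset.univ →
      ∃ v ∈ Finset.univ \ C, g C < g (insert v C))
    -- an optimal solution
    (Cstar : Finset X) (hfeas : g Cstar = g Finset.univ)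
    (opt : ℝ) (hopt : opt = ∑ v ∈ Cstar, w v)
    (hoptmin : ∀ D : Finset X, g D = g Finset.univ → opt ≤ ∑ v ∈ D, w v)
    -- condition (ii)
    (p : ℝ) (hp : 0 ≤ p)
    (hii : ∀ C : Finset X, ∃ (t : ℕ) (v : ℕ → X),
      Set.InjOn v (Set.Iio t) ∧
      (∀ i < t, v i ∈ Cstar \ C) ∧
      g (C ∪ (Finset.range t).image v) = g Finset.univ ∧
      (∀ t' < t, g (C ∪ (Finset.range t').image v) < g Finset.univ) ∧
      (∀ i < t, g (C ∪ (Finset.range (i + 1)).image v)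
          - g (C ∪ (Finset.range i).image v) ≤ g (insert (v i) C) - g C + p))
    -- the greedy algorithm
    (step : Finset X → Finset X)
    (hstop : ∀ C : Finset X, g C = g Finset.univ → step C = C)
    (hgreedy : ∀ C : Finset X, g C < g Finset.univ →
      ∃ b ∈ Finset.univ \ C, step C = insert b C ∧
        ∀ v ∈ Finset.univ \ C,
          (g (insert v C) - g C) / w v ≤ (g (insert b C) - g C) / w b)
    -- its (feasible) output
    (k : ℕ) (hk : g (step^[k] ∅) = g Finset.univ) :
    ∑ v ∈ step^[k] ∅, w v ≤
      ((p + 1) * wmax / δ +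
        (if g Finset.univ - (p + 1) * opt ≤ 0 then 0
         else Real.log ((g Finset.univ - p * opt) / opt))) * opt := by
  have hopt_nonneg : 0 ≤ opt := hopt ▸ sum_nonneg fun v _ ↦ zero_le_one.trans (hw1 v)
  rcases (hempty ▸ hmono (empty_subset univ) : 0 ≤ g univ).eq_or_lt with hg0 | hgpos
  · have hopt0 : opt = 0 :=
      le_antisymm (by simpa using hoptmin ∅ (hempty.trans hg0)) hopt_nonneg
    rw [Function.iterate_fixed (hstop ∅ (hempty.trans hg0)) k, hopt0]
    simp
  obtain ⟨x₀, hx₀⟩ : Cstar.Nonempty := nonempty_iff_ne_empty.2 fun h ↦ by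
    rw [h, hempty] at hfeas
    exact hgpos.ne hfeas
  have hoptpos : 0 < opt := hopt ▸ sum_pos (fun v _ ↦ one_pos.trans_le (hw1 v)) ⟨x₀, hx₀⟩
  have hθ : 0 ≤ wmax / δ := div_nonneg (zero_le_one.trans ((hw1 x₀).trans (hwmax x₀))) hδpos.le
  set Φ := fun C ↦ potential (wmax / δ) opt (g univ - g C - p * opt) with hΦ
  have hstep : ∀ C, step C = C ∨
      ∃ b ∉ C, step C = insert b C ∧ w b ≤ Φ C - Φ (insert b C) := fun C ↦ by
    rcases (hmono (subset_univ C)).eq_or_lt with hC | hC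
    · exact .inl (hstop C hC)
    obtain ⟨b, hb, hins, hbest⟩ := hgreedy C hC
    obtain ⟨t, v, hinj, hmem, hcov, -, hord⟩ := hii C
    have hbC := (mem_sdiff.1 hb).2
    exact .inr ⟨b, hbC, hins, greedy_step_le_potential_sub hw1 (hwmax b) hδpos (hδ C b hbC)
      (hprog C hC) hopt.ge hoptpos hp hinj hmem hcov hord hbest⟩
  have hrun := sum_iterate_add_le_of_step hstep ∅ k
  simp only [hΦ, hk, hempty, sum_empty, sub_self, zero_sub, sub_zero] at hrun
  rw [potential_of_le ((neg_nonpos.2 (mul_nonneg hp hopt_nonneg)).trans hopt_nonneg)] at hrun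
  rw [mul_div_assoc]
  have := potential_sub_add_le hθ (g univ) p opt
  linarith

/-- approximation ratio of the greedy algorithm for MinGC. -/
theorem stmt_8 {X : Type*} [Fintype X] [DecidableEq X]
    (w : X → ℝ) (hw1 : ∀ v, 1 ≤ w v)
    (wmax : ℝ) (hwmax : ∀ v, w v ≤ wmax)
    (g : Finset X → ℝ) (hnonneg : ∀ S, 0 ≤ g S) (hmono : Monotone g)
    (hempty : g ∅ = 0)
    (δ : ℝ) (hδpos : 0 < δ)
    (hδ : ∀ (C : Finset X) (v : X), v ∉ C → g C < g (insert v C) →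
      δ ≤ g (insert v C) - g C)
    -- condition (i)
    (hprog : ∀ C : Finset X, g C < g Finset.univ →
      ∃ v ∈ Finset.univ \ C, g C < g (insert v C))
    -- an optimal solution
    (Cstar : Finset X) (hfeas : g Cstar = g Finset.univ)
    (opt : ℝ) (hopt : opt = ∑ v ∈ Cstar, w v)
    (hoptmin : ∀ D : Finset X, g D = g Finset.univ → opt ≤ ∑ v ∈ D, w v)
    -- condition (ii)
    (p : ℝ) (hp : 0 ≤ p)
    (hii : ∀ C : Finset X, ∃ (t : ℕ) (v : ℕ → X),
      Set.InjOn v (Set.Iio t) ∧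
      (∀ i < t, v i ∈ Cstar \ C) ∧
      g (C ∪ (Finset.range t).image v) = g Finset.univ ∧
      (∀ t' < t, g (C ∪ (Finset.range t').image v) < g Finset.univ) ∧
      (∀ i < t, g (C ∪ (Finset.range (i + 1)).image v)
          - g (C ∪ (Finset.range i).image v) ≤ g (insert (v i) C) - g C + p))
    -- the greedy algorithm
    (step : Finset X → Finset X)
    (hstop : ∀ C : Finset X, g C = g Finset.univ → step C = C)
    (hgreedy : ∀ C : Finset X, g C < g Finset.univ →
      ∃ b ∈ Finset.univ \ C, step C = insert b C ∧
        ∀ v ∈ Finset.univ \ C,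
          (g (insert v C) - g C) / w v ≤ (g (insert b C) - g C) / w b)
    -- its (feasible) output
    (k : ℕ) (hk : g (step^[k] ∅) = g Finset.univ) :
    ∑ v ∈ step^[k] ∅, w v ≤
      ((p + 1) * wmax / δ +
        (if g Finset.univ - (p + 1) * opt ≤ 0 then 0
         else Real.log ((g Finset.univ - p * opt) / opt))) * opt :=
  stmt_8_general w hw1 wmax hwmax g hmono hempty δ hδpos hδ hprog Cstar hfeas opt hopt hoptmin p hp
    hii step hstop hgreedy k hk
end

section
/- Under the conditions of the greedy theorem, with α_i := g(X) - g(C_i) - p·opt where C_i is the greedy solution after i steps: if α_{i-1} > 0 then α_i ≤ e^{-w(b_i)/opt} · α_{i-1}, where b_i is the element added at step i. -/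
/-!
Condition (ii) completes `C` to a feasible set by adding distinct elements `v 0, …, v (t-1)` of
`C*`, each raising `g` by at most its own marginal gain over `C` plus `p`. By the greedy choice that
marginal gain is at most `w (v i) * r`, where `r` is the gain ratio of `b`, so telescoping gives
`α ≤ r * opt`, using `∑ w (v i) ≤ opt` and `t ≤ opt` (weights are at least `1`). Hence adding `b`
lowers `α` by `w b * r ≥ (w b / opt) * α`, and `1 - x ≤ exp (-x)` finishes.
-/

open Finset

section Greedy

variable {X : Type*} [DecidableEq X]

theorem sub_le_sum_of_increments_le (g : Finset X → ℝ) (C : Finset X) (v : ℕ → X) (t : ℕ)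
    (c : ℕ → ℝ)
    (h : ∀ i < t, g (C ∪ (range (i + 1)).image v) - g (C ∪ (range i).image v) ≤ c i) :
    g (C ∪ (range t).image v) - g C ≤ ∑ i ∈ range t, c i := by
  have htele := sum_range_sub (fun i => g (C ∪ (range i).image v)) t
  simp only [range_zero, image_empty, union_empty] at htele
  rw [← htele]
  exact sum_le_sum fun i hi => h i (mem_range.mp hi)

theorem sum_comp_le_sum_of_injOn {s : Finset X} {w : X → ℝ} (hw : ∀ x ∈ s, 0 ≤ w x)
    {v : ℕ → X} {t : ℕ} (hinj : Set.InjOn v (Set.Iio t)) (hv : ∀ i < t, v i ∈ s) :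
    ∑ i ∈ range t, w (v i) ≤ ∑ x ∈ s, w x := by
  rw [← sum_image fun i hi j hj hij =>
    hinj (Set.mem_Iio.mpr (mem_range.mp hi)) (Set.mem_Iio.mpr (mem_range.mp hj)) hij]
  refine sum_le_sum_of_subset_of_nonneg ?_ fun x hx _ => hw x hx
  intro x hx
  obtain ⟨i, hi, rfl⟩ := mem_image.mp hx
  exact hv i (mem_range.mp hi)

end Greedy

theorem pos_and_le_mul_of_le_mul {α r S opt : ℝ} (hα : 0 < α) (hαS : α ≤ r * S) (hS : 0 ≤ S)
    (hSopt : S ≤ opt) : 0 < opt ∧ α ≤ r * opt := by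
  have hr : 0 < r := pos_of_mul_pos_left (hα.trans_le hαS) hS
  have hS_pos : 0 < S := pos_of_mul_pos_right (hα.trans_le hαS) hr.le
  exact ⟨hS_pos.trans_le hSopt, hαS.trans (mul_le_mul_of_nonneg_left hSopt hr.le)⟩

theorem sub_mul_le_exp_mul {α r a opt : ℝ} (hopt : 0 < opt) (hα : 0 ≤ α) (ha : 0 ≤ a)
    (hαr : α ≤ r * opt) : α - a * r ≤ Real.exp (-a / opt) * α := by
  have hr : α / opt ≤ r := (div_le_iff₀ hopt).mpr hαr
  calc α - a * r ≤ α - a * (α / opt) := by gcongr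
    _ = (-a / opt + 1) * α := by field_simp; ring
    _ ≤ Real.exp (-a / opt) * α := by gcongr; exact Real.add_one_le_exp _

theorem stmt_9_general {X : Type*} [Fintype X] [DecidableEq X]
    (w : X → ℝ) (hw1 : ∀ v, 1 ≤ w v)
    (g : Finset X → ℝ)
    (Cstar : Finset X)
    (opt : ℝ) (hopt : opt = ∑ v ∈ Cstar, w v)
    (p : ℝ) (hp : 0 ≤ p)
    (C : Finset X)
    -- condition (ii) for the current greedy set C
    (hii : ∃ (t : ℕ) (v : ℕ → X),
      Set.InjOn v (Set.Iio t) ∧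
      (∀ i < t, v i ∈ Cstar \ C) ∧
      g (C ∪ (Finset.range t).image v) = g Finset.univ ∧
      (∀ t' < t, g (C ∪ (Finset.range t').image v) < g Finset.univ) ∧
      (∀ i < t, g (C ∪ (Finset.range (i + 1)).image v)
          - g (C ∪ (Finset.range i).image v) ≤ g (insert (v i) C) - g C + p))
    -- b is the greedy choice at this step
    (b : X)
    (hbmax : ∀ v ∈ Finset.univ \ C,
      (g (insert v C) - g C) / w v ≤ (g (insert b C) - g C) / w b)
    (hα : 0 < g Finset.univ - g C - p * opt) :
    g Finset.univ - g (insert b C) - p * opt ≤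
      Real.exp (-(w b) / opt) * (g Finset.univ - g C - p * opt) := by
  obtain ⟨t, v, hinj, hmem, hcover, -, hinc⟩ := hii
  set r := (g (insert b C) - g C) / w b
  have hw_pos : ∀ x, 0 < w x := fun x => one_pos.trans_le (hw1 x)
  have hstep : ∀ i < t, g (C ∪ (range (i + 1)).image v) - g (C ∪ (range i).image v) ≤
      w (v i) * r + p := by
    intro i hi
    have hratio := hbmax (v i) (by simpa using (mem_sdiff.mp (hmem i hi)).2)
    have := (div_le_iff₀ (hw_pos (v i))).mp hratio
    linarith [hinc i hi]
  have hweights : ∑ i ∈ range t, w (v i) ≤ opt := hopt ▸ sum_comp_le_sum_of_injOn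
    (fun x _ => (hw_pos x).le) hinj fun i hi => (mem_sdiff.mp (hmem i hi)).1
  have hcard : (t : ℝ) ≤ opt :=
    calc (t : ℝ) = ∑ i ∈ range t, (1 : ℝ) := by simp
      _ ≤ ∑ i ∈ range t, w (v i) := sum_le_sum fun i _ => hw1 (v i)
      _ ≤ opt := hweights
  have hα_le : g univ - g C - p * opt ≤ r * ∑ i ∈ range t, w (v i) := by
    have htele := sub_le_sum_of_increments_le g C v t _ hstep
    rw [hcover, sum_add_distrib, ← sum_mul, sum_const, card_range, nsmul_eq_mul] at htele
    linarith [mul_le_mul_of_nonneg_left hcard hp]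
  obtain ⟨hopt_pos, hα_opt⟩ := pos_and_le_mul_of_le_mul hα hα_le
    (sum_nonneg fun i _ => (hw_pos (v i)).le) hweights
  have hgain : g (insert b C) - g C = w b * r := (mul_div_cancel₀ _ (hw_pos b).ne').symm
  calc g univ - g (insert b C) - p * opt = (g univ - g C - p * opt) - w b * r := by linarith
    _ ≤ _ := sub_mul_le_exp_mul hopt_pos hα.le (hw_pos b).le hα_opt

/-- one-step geometric decrease of `α_i = g(X) - g(C_i) - p·opt`
under the greedy choice. -/
theorem stmt_9 {X : Type*} [Fintype X] [DecidableEq X]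
    (w : X → ℝ) (hw1 : ∀ v, 1 ≤ w v)
    (g : Finset X → ℝ) (hnonneg : ∀ S, 0 ≤ g S) (hmono : Monotone g)
    (hempty : g ∅ = 0)
    (Cstar : Finset X) (hfeas : g Cstar = g Finset.univ)
    (opt : ℝ) (hopt : opt = ∑ v ∈ Cstar, w v)
    (p : ℝ) (hp : 0 ≤ p)
    (C : Finset X)
    -- condition (ii) for the current greedy set C
    (hii : ∃ (t : ℕ) (v : ℕ → X),
      Set.InjOn v (Set.Iio t) ∧
      (∀ i < t, v i ∈ Cstar \ C) ∧
      g (C ∪ (Finset.range t).image v) = g Finset.univ ∧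
      (∀ t' < t, g (C ∪ (Finset.range t').image v) < g Finset.univ) ∧
      (∀ i < t, g (C ∪ (Finset.range (i + 1)).image v)
          - g (C ∪ (Finset.range i).image v) ≤ g (insert (v i) C) - g C + p))
    -- b is the greedy choice at this step
    (b : X) (hb : b ∉ C)
    (hbmax : ∀ v ∈ Finset.univ \ C,
      (g (insert v C) - g C) / w v ≤ (g (insert b C) - g C) / w b)
    (hα : 0 < g Finset.univ - g C - p * opt) :
    g Finset.univ - g (insert b C) - p * opt ≤
      Real.exp (-(w b) / opt) * (g Finset.univ - g C - p * opt) :=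
  stmt_9_general w hw1 g Cstar opt hopt p hp C hii b hbmax hα
end

section
/- For a graph G = (V,E), the function C ↦ -q(C) is submodular, where q(C) is the number of connected components of the spanning subgraph of G induced by the edges incident with C (isolated vertices counted as components). That is, for all A ⊆ B ⊆ V and v ∉ B: q(A) - q(A∪{v}) ≥ q(B) - q(B∪{v}). -/
/-- The spanning subgraph `G⟨C⟩` of `G` induced by the edges incident with `C`. -/
def incidentSubgraph {V : Type*} (G : SimpleGraph V) (C : Set V) : SimpleGraph V where
  Adj a b := G.Adj a b ∧ (a ∈ C ∨ b ∈ C)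
  symm := ⟨fun _ _ ⟨h, hc⟩ => ⟨h.symm, hc.symm⟩⟩
  loopless := ⟨fun a ⟨h, _⟩ => G.ne_of_adj h rfl⟩

/-- `q(C)`: number of connected components of `G⟨C⟩` (isolated vertices count). -/
noncomputable def qcomp {V : Type*} (G : SimpleGraph V) (C : Set V) : ℕ :=
  Nat.card (incidentSubgraph G C).ConnectedComponent

open SimpleGraph

section Aux

variable {V : Type*}

lemma incident_mono (G : SimpleGraph V) {C D : Set V} (h : C ⊆ D) :
    incidentSubgraph G C ≤ incidentSubgraph G D :=
  fun _ _ hab => ⟨hab.1, hab.2.imp (fun h' => h h') (fun h' => h h')⟩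

/-- The natural homomorphism between incident subgraphs. -/
def homMono (G : SimpleGraph V) {C D : Set V} (h : C ⊆ D) :
    incidentSubgraph G C →g incidentSubgraph G D :=
  SimpleGraph.Hom.ofLE (incident_mono G h)

/-- Any vertex of the star of `v` is reachable from `v` in `G⟨C ∪ {v}⟩`. -/
lemma star_reach (G : SimpleGraph V) {C : Set V} {v x : V} (hx : x = v ∨ G.Adj v x) :
    (incidentSubgraph G (insert v C)).Reachable x v := by
  rcases hx with rfl | hx
  · exact Reachable.refl _
  · exact SimpleGraph.Adj.reachable ⟨hx.symm, Or.inr (Set.mem_insert v C)⟩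

/-- Key walk analysis: reachability in `G⟨C ∪ {v}⟩` reduces to reachability in `G⟨C⟩`
unless the start hits the star of `v`. -/
lemma key (G : SimpleGraph V) {C : Set V} {v y z : V}
    (h : (incidentSubgraph G (insert v C)).Reachable y z) :
    (incidentSubgraph G C).Reachable y z ∨
      ∃ x, (x = v ∨ G.Adj v x) ∧ (incidentSubgraph G C).Reachable y x := by
  obtain ⟨w⟩ := h
  induction w with
  | nil => exact Or.inl (Reachable.refl _)
  | @cons a b c hab p ih =>
    by_cases ha : a = v
    · exact Or.inr ⟨a, Or.inl ha, Reachable.refl a⟩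
    by_cases hb : b = v
    · exact Or.inr ⟨a, Or.inr (by subst hb; exact hab.1.symm), Reachable.refl a⟩
    have hC : (incidentSubgraph G C).Adj a b :=
      ⟨hab.1, hab.2.imp (fun h1 => (Set.mem_insert_iff.mp h1).resolve_left ha)
                        (fun h1 => (Set.mem_insert_iff.mp h1).resolve_left hb)⟩
    rcases ih with h1 | ⟨x, hx, hr⟩
    · exact Or.inl (hC.reachable.trans h1)
    · exact Or.inr ⟨x, hx, hC.reachable.trans hr⟩

/-- Generic counting: if `f` is surjective and injective outside the fiber of `c`, then
`card α + 1 = card (fiber of c) + card β`. -/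
lemma card_split {α β : Type*} [Finite α] (f : α → β) (c : β)
    (hsurj : Function.Surjective f)
    (hinj : ∀ a a', f a = f a' → f a ≠ c → a = a') :
    Nat.card α + 1 = Nat.card {a // f a = c} + Nat.card β := by
  classical
  have hfb : Finite β := Finite.of_surjective f hsurj
  have h1 : Nat.card α = Nat.card {a // f a = c} + Nat.card {a // ¬f a = c} := by
    rw [← Nat.card_sum]
    exact Nat.card_congr (Equiv.sumCompl (fun a => f a = c)).symm
  have e : {a // ¬f a = c} ≃ {b // ¬b = c} := by
    refine Equiv.ofBijective (fun a => ⟨f a.1, a.2⟩) ⟨?_, ?_⟩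
    · rintro ⟨a, ha⟩ ⟨a', ha'⟩ h
      exact Subtype.ext (hinj a a' (congrArg Subtype.val h) ha)
    · rintro ⟨b, hb⟩
      obtain ⟨a, rfl⟩ := hsurj b
      exact ⟨⟨a, hb⟩, rfl⟩
  have h2 : Nat.card β = Nat.card {b // b = c} + Nat.card {b // ¬b = c} := by
    rw [← Nat.card_sum]
    exact Nat.card_congr (Equiv.sumCompl (fun b => b = c)).symm
  have h3 : Nat.card {b // b = c} = 1 := by
    haveI : Unique {b // b = c} := ⟨⟨⟨c, rfl⟩⟩, fun x => Subtype.ext x.2⟩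
    exact Nat.card_unique
  have h4 := Nat.card_congr e
  omega

/-- The number of components of `G⟨C⟩` meeting the star of `v`. -/
noncomputable def fiberCard (G : SimpleGraph V) (C : Set V) (v : V) : ℕ :=
  Nat.card {D : (incidentSubgraph G C).ConnectedComponent //
    D.map (homMono G (Set.subset_insert v C)) =
      (incidentSubgraph G (insert v C)).connectedComponentMk v}

lemma q_insert (G : SimpleGraph V) [Finite V] (C : Set V) (v : V) :
    qcomp G C + 1 = fiberCard G C v + qcomp G (insert v C) := by
  classical
  have hmk : ∀ x : V,
      ((incidentSubgraph G C).connectedComponentMk x).map (homMono G (Set.subset_insert v C)) =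
        (incidentSubgraph G (insert v C)).connectedComponentMk x := fun x =>
    ConnectedComponent.map_mk _ _
  have hsurj : Function.Surjective
      (fun D : (incidentSubgraph G C).ConnectedComponent =>
        D.map (homMono G (Set.subset_insert v C))) := by
    intro E
    refine SimpleGraph.ConnectedComponent.ind (fun x => ⟨_, hmk x⟩) E
  have hinj : ∀ D D' : (incidentSubgraph G C).ConnectedComponent,
      D.map (homMono G (Set.subset_insert v C)) = D'.map (homMono G (Set.subset_insert v C)) →
      D.map (homMono G (Set.subset_insert v C)) ≠
        (incidentSubgraph G (insert v C)).connectedComponentMk v → D = D' := by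
    refine SimpleGraph.ConnectedComponent.ind₂ ?_
    intro x x' h hne
    rw [hmk, hmk] at h
    rw [hmk] at hne
    have hr := SimpleGraph.ConnectedComponent.exact h
    rcases key G hr with h1 | ⟨s, hs, hr2⟩
    · exact SimpleGraph.ConnectedComponent.sound h1
    · exact absurd (SimpleGraph.ConnectedComponent.sound
        (((hr2.mono (incident_mono G (Set.subset_insert v C))).trans (star_reach G hs)))) hne
  exact card_split _ _ hsurj hinj

lemma fiber_le (G : SimpleGraph V) [Finite V] {A B : Set V} (hAB : A ⊆ B) (v : V) :
    fiberCard G B v ≤ fiberCard G A v := by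
  classical
  have hBv : insert v A ⊆ insert v B := Set.insert_subset_insert hAB
  have wd : ∀ D : (incidentSubgraph G A).ConnectedComponent,
      D.map (homMono G (Set.subset_insert v A)) =
        (incidentSubgraph G (insert v A)).connectedComponentMk v →
      (D.map (homMono G hAB)).map (homMono G (Set.subset_insert v B)) =
        (incidentSubgraph G (insert v B)).connectedComponentMk v := by
    refine SimpleGraph.ConnectedComponent.ind ?_
    intro x hx
    rw [ConnectedComponent.map_mk] at hx ⊢
    rw [ConnectedComponent.map_mk]
    have hr := SimpleGraph.ConnectedComponent.exact hx
    exact SimpleGraph.ConnectedComponent.sound (hr.mono (incident_mono G hBv))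
  let g : {D : (incidentSubgraph G A).ConnectedComponent //
        D.map (homMono G (Set.subset_insert v A)) =
          (incidentSubgraph G (insert v A)).connectedComponentMk v} →
      {D : (incidentSubgraph G B).ConnectedComponent //
        D.map (homMono G (Set.subset_insert v B)) =
          (incidentSubgraph G (insert v B)).connectedComponentMk v} :=
    fun D => ⟨D.1.map (homMono G hAB), wd D.1 D.2⟩
  have hg : Function.Surjective g := by
    rintro ⟨E, hE⟩
    obtain ⟨y, rfl⟩ : ∃ y, (incidentSubgraph G B).connectedComponentMk y = E := E.exists_rep
    rw [ConnectedComponent.map_mk] at hE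
    have hr : (incidentSubgraph G (insert v B)).Reachable y v :=
      SimpleGraph.ConnectedComponent.exact hE
    rcases key G hr with h1 | ⟨x, hx, hr2⟩
    · -- y reachable to v already in G⟨B⟩; then v itself is a good representative
      refine ⟨⟨(incidentSubgraph G A).connectedComponentMk v, ?_⟩, ?_⟩
      · rw [ConnectedComponent.map_mk]; rfl
      · simp only [g, ConnectedComponent.map_mk]
        exact Subtype.ext (SimpleGraph.ConnectedComponent.sound h1.symm)
    · refine ⟨⟨(incidentSubgraph G A).connectedComponentMk x, ?_⟩, ?_⟩
      · rw [ConnectedComponent.map_mk]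
        exact SimpleGraph.ConnectedComponent.sound (star_reach G hx)
      · simp only [g, ConnectedComponent.map_mk]
        exact Subtype.ext (SimpleGraph.ConnectedComponent.sound hr2.symm)
  exact Nat.card_le_card_of_surjective g hg

end Aux

/-- `-q` is submodular. -/
theorem stmt_12 {V : Type*} [Fintype V] [DecidableEq V] (G : SimpleGraph V)
    (A B : Finset V) (hAB : A ⊆ B) (v : V) (hv : v ∉ B) :
    (qcomp G (A : Set V) : ℤ) - qcomp G ((insert v A : Finset V) : Set V) ≥
      (qcomp G (B : Set V) : ℤ) - qcomp G ((insert v B : Finset V) : Set V) := by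
  have hA := q_insert G (A : Set V) v
  have hB := q_insert G (B : Set V) v
  have hm := fiber_le G (Finset.coe_subset.mpr hAB) v
  simp only [Finset.coe_insert]
  omega
end

section
/- Suppose reals f₁(x'), f₁(x), f₂(x'), f₂(x), opt > 0, and constant q satisfy f₁(x') - q ≤ (1 - (f₂(x') - f₂(x))/opt)·(f₁(x) - q) and f₁(x) ≤ A·e^{-f₂(x)/opt} + q for some A ≥ 0 and f₁(x) ≥ q. Then f₁(x') ≤ A·e^{-f₂(x')/opt} + q. -/
theorem stmt_16 (f1x' f1x f2x' f2x opt q A : ℝ) (hopt : 0 < opt) (hA : 0 ≤ A)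
    (hfq : q ≤ f1x)
    (hadv : f1x' - q ≤ (1 - (f2x' - f2x) / opt) * (f1x - q))
    (hqc : f1x ≤ A * Real.exp (-f2x / opt) + q) :
    f1x' ≤ A * Real.exp (-f2x' / opt) + q := by
  have h1 : (1 - (f2x' - f2x) / opt) ≤ Real.exp (-((f2x' - f2x) / opt)) := by
    linarith [Real.add_one_le_exp (-((f2x' - f2x) / opt))]
  have h2 : f1x - q ≤ A * Real.exp (-f2x / opt) := by linarith
  have h3 : f1x' - q ≤ Real.exp (-((f2x' - f2x) / opt)) * (A * Real.exp (-f2x / opt)) := by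
    calc f1x' - q ≤ (1 - (f2x' - f2x) / opt) * (f1x - q) := hadv
    _ ≤ Real.exp (-((f2x' - f2x) / opt)) * (f1x - q) :=
        mul_le_mul_of_nonneg_right h1 (by linarith)
    _ ≤ Real.exp (-((f2x' - f2x) / opt)) * (A * Real.exp (-f2x / opt)) :=
        mul_le_mul_of_nonneg_left h2 (Real.exp_pos _).le
  have : Real.exp (-((f2x' - f2x) / opt)) * Real.exp (-f2x / opt) = Real.exp (-f2x' / opt) := by
    rw [← Real.exp_add]; ring_nf
  nlinarith [this]
end

section
/- If f₁(x) = iδ with i ≥ ⌊(p+2δ+1)·opt/δ⌋ ≥ ((p+2δ+1)·opt/δ) - 1 and f₁(x) ≤ α'_0·e^{-f₂(x)/opt} + (p+2δ)·opt with opt > δ > 0 and α'_0 > 0, then f₂(x) ≤ opt·ln(α'_0/(opt - δ)). -/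
/-!
Since `i ≥ ⌊(p + 2δ + 1)·opt/δ⌋ > (p + 2δ + 1)·opt/δ - 1`, we get
`f₁ = iδ > (p + 2δ + 1)·opt - δ`; comparing with the upper bound on `f₁` leaves
`opt - δ < α'₀·e^{-f₂/opt}`, and taking logarithms gives the claim.
-/

open Real

lemma sub_lt_mul_of_floor_div_le {a δ : ℝ} (hδ : 0 < δ) {n : ℤ} (h : ⌊a / δ⌋ ≤ n) :
    a - δ < n * δ := by
  have hlt : a / δ < n + 1 := by
    have : (⌊a / δ⌋ : ℝ) ≤ n := by exact_mod_cast h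
    linarith [Int.lt_floor_add_one (a / δ)]
  have := (div_lt_iff₀ hδ).1 hlt
  linarith

lemma le_mul_log_of_le_mul_exp {a c t x : ℝ} (ha : 0 < a) (hc : 0 < c) (ht : 0 < t)
    (h : c ≤ a * exp (-x / t)) : x ≤ t * log (a / c) := by
  have hexp : exp (x / t) ≤ a / c := by
    rw [le_div_iff₀ hc, ← le_div_iff₀' (exp_pos _), div_eq_mul_inv, ← exp_neg, ← neg_div]
    exact h
  have hlog : x / t ≤ log (a / c) := (le_log_iff_exp_le (div_pos ha hc)).2 hexp
  rwa [div_le_iff₀' ht] at hlog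

theorem stmt_17_general (p δ opt α0 f1 f2 : ℝ) (i : ℕ)
    (hδ : 0 < δ) (hopt : δ < opt) (hα0 : 0 < α0)
    (hf1 : f1 = (i : ℝ) * δ)
    (hi : (⌊(p + 2 * δ + 1) * opt / δ⌋ : ℤ) ≤ (i : ℤ))
    (hqc : f1 ≤ α0 * Real.exp (-f2 / opt) + (p + 2 * δ) * opt) :
    f2 ≤ opt * Real.log (α0 / (opt - δ)) := by
  have hf1_lower : (p + 2 * δ + 1) * opt - δ < f1 := by
    simpa [hf1] using sub_lt_mul_of_floor_div_le hδ hi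
  apply le_mul_log_of_le_mul_exp hα0 (sub_pos.2 hopt) (hδ.trans hopt)
  linarith

theorem stmt_17 (p δ opt α0 f1 f2 : ℝ) (i : ℕ)
    (hp : 0 ≤ p) (hδ : 0 < δ) (hopt : δ < opt) (hα0 : 0 < α0)
    (hf1 : f1 = (i : ℝ) * δ)
    (hi : (⌊(p + 2 * δ + 1) * opt / δ⌋ : ℤ) ≤ (i : ℤ))
    (hqc : f1 ≤ α0 * Real.exp (-f2 / opt) + (p + 2 * δ) * opt) :
    f2 ≤ opt * Real.log (α0 / (opt - δ)) :=
  stmt_17_general p δ opt α0 f1 f2 i hδ hopt hα0 hf1 hi hqc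
end
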